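/- Let (X, d) be a metric space and let (X, δ) be its diameter diversity, δ = diam_d, with diversity tight span (T_X, δ_T). Then (T_X, δ_T) is itself a diameter diversity: for every finite F ⊆ T_X with |F| ≥ 2, δ_T(F) = max{δ_T({f₁, f₂}) : f₁, f₂ ∈ F}. -/

import Mathlib

open scoped Classical

noncomputable section

/-- A diversity: axioms (D1) and (D2). -/
def IsDiversity {X : Type*} (δ : Finset X → ℝ) : Prop :=
  (∀ A, 0 ≤ δ A) ∧ (∀ A, δ A = 0 ↔ A.card ≤ 1) ∧
    ∀ A B C : Finset X, B ≠ ∅ → δ (A ∪ C) ≤ δ (A ∪ B) + δ (B ∪ C)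

/-- Membership in `P_X`: `f ∅ = 0` and `Σ_{A ∈ 𝓐} f A ≥ δ (⋃ 𝓐)` for every finite
collection `𝓐` of finite subsets of `X`. -/
def MemP {X : Type*} (δ : Finset X → ℝ) (f : Finset X → ℝ) : Prop :=
  f ∅ = 0 ∧ ∀ 𝓐 : Finset (Finset X), δ (𝓐.sup id) ≤ ∑ A ∈ 𝓐, f A

/-- Membership in the tight span `T_X`: the pointwise-minimal elements of `P_X`. -/
def MemT {X : Type*} (δ : Finset X → ℝ) (f : Finset X → ℝ) : Prop :=
  MemP δ f ∧ ∀ g : Finset X → ℝ, MemP δ g → (∀ A, g A ≤ f A) → g = f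

/-- The function `δ_T` on finite subsets of the tight span: `δ_T ∅ = 0` and for nonempty `F`,
`δ_T F = sup { δ(⋃𝓐) - Σ_{A ∈ 𝓐} inf_{f ∈ F} f A : 𝓐 a finite collection of finite subsets }`. -/
noncomputable def deltaT {X : Type*} (δ : Finset X → ℝ) (F : Finset (Finset X → ℝ)) : ℝ :=
  if F = ∅ then 0
  else sSup {r : ℝ | ∃ 𝓐 : Finset (Finset X),
    r = δ (𝓐.sup id) - ∑ A ∈ 𝓐, sInf ((fun f => f A) '' (F : Set (Finset X → ℝ)))}

/-- The diameter diversity of a metric space. -/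
noncomputable def diamDiv (X : Type*) [MetricSpace X] : Finset X → ℝ :=
  fun A => Metric.diam (A : Set X)

/-! The diameter of `⋃ 𝓐` is attained at two points, lying in some `A₁, A₂ ∈ 𝓐`. Dropping the
other members of `𝓐` (their infima are nonnegative) and replacing each infimum over `F` at `Aᵢ`
by a minimizer `fᵢ` bounds every term of the supremum defining `δ_T F` by a term of the supremum
defining `δ_T {f₁, f₂}`. Conversely `δ_T` is monotone, as infima over a larger family are smaller.
The suprema are finite because `diam (A ∪ B) ≤ diam (A ∪ {x}) + diam ({x} ∪ B)` and
`f ∈ P_X` gives `δ (A ∪ E) ≤ f A + f E`. -/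

section General

variable {X : Type*}

def infEval (G : Finset (Finset X → ℝ)) (A : Finset X) : ℝ :=
  sInf ((fun f => f A) '' (G : Set (Finset X → ℝ)))

def deltaTTerm (δ : Finset X → ℝ) (G : Finset (Finset X → ℝ)) (𝓐 : Finset (Finset X)) : ℝ :=
  δ (𝓐.sup id) - ∑ A ∈ 𝓐, infEval G A

variable {δ : Finset X → ℝ} {G H : Finset (Finset X → ℝ)} {f : Finset X → ℝ}

lemma deltaT_eq_iSup (hG : G.Nonempty) : deltaT δ G = ⨆ 𝓐, deltaTTerm δ G 𝓐 := by
  rw [deltaT, if_neg hG.ne_empty, iSup]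
  congr 1
  ext r
  simp only [Set.mem_ofPred_eq, Set.mem_range, deltaTTerm, infEval, eq_comm]

lemma infEval_eq_inf' (hG : G.Nonempty) (A : Finset X) :
    infEval G A = G.inf' hG (fun f => f A) := by
  rw [Finset.inf'_eq_csInf_image]
  rfl

lemma infEval_le (hf : f ∈ G) (A : Finset X) : infEval G A ≤ f A := by
  rw [infEval_eq_inf' ⟨f, hf⟩]
  exact Finset.inf'_le _ hf

lemma exists_eq_infEval (hG : G.Nonempty) (A : Finset X) : ∃ f ∈ G, f A = infEval G A := by
  obtain ⟨f, hf, h⟩ := Finset.exists_mem_eq_inf' hG (fun f => f A)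
  exact ⟨f, hf, by rw [infEval_eq_inf' hG, h]⟩

lemma infEval_nonneg (hG : ∀ f ∈ G, ∀ A, 0 ≤ f A) (A : Finset X) : 0 ≤ infEval G A :=
  Real.sInf_nonneg <| by
    rintro _ ⟨f, hf, rfl⟩
    exact hG f hf A

lemma infEval_anti (hGH : G ⊆ H) (hG : G.Nonempty) (A : Finset X) :
    infEval H A ≤ infEval G A := by
  obtain ⟨f, hf, hfA⟩ := exists_eq_infEval hG A
  exact hfA ▸ infEval_le (hGH hf) A

lemma deltaTTerm_le_deltaT (hG : G.Nonempty) (hbdd : BddAbove (Set.range (deltaTTerm δ G)))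
    (𝓐 : Finset (Finset X)) : deltaTTerm δ G 𝓐 ≤ deltaT δ G := by
  rw [deltaT_eq_iSup hG]
  exact le_ciSup hbdd 𝓐

lemma deltaT_mono (hGH : G ⊆ H) (hG : G.Nonempty) (hbdd : BddAbove (Set.range (deltaTTerm δ H))) :
    deltaT δ G ≤ deltaT δ H := by
  rw [deltaT_eq_iSup hG, deltaT_eq_iSup (hG.mono hGH)]
  exact ciSup_mono hbdd fun 𝓐 =>
    sub_le_sub_left (Finset.sum_le_sum fun A _ => infEval_anti hGH hG A) _

lemma sub_sub_le_deltaTTerm_pair {f₁ f₂ : Finset X → ℝ} (hf₂ : ∀ A, 0 ≤ f₂ A) (A₁ A₂ : Finset X) :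
    δ (A₁ ∪ A₂) - f₁ A₁ - f₂ A₂ ≤ deltaTTerm δ {f₁, f₂} {A₁, A₂} := by
  have h₁ : infEval {f₁, f₂} A₁ ≤ f₁ A₁ := infEval_le (by simp) A₁
  have h₂ : infEval {f₁, f₂} A₂ ≤ f₂ A₂ := infEval_le (by simp) A₂
  rcases eq_or_ne A₁ A₂ with rfl | hne
  · simp only [deltaTTerm, Finset.pair_eq_singleton, Finset.sup_singleton, id,
      Finset.sum_singleton, Finset.union_self]
    linarith [hf₂ A₁]
  · simp only [deltaTTerm, Finset.sup_insert, Finset.sup_singleton, id, Finset.sup_eq_union,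
      Finset.sum_pair hne]
    linarith

lemma MemP.le (hf : MemP δ f) (A : Finset X) : δ A ≤ f A := by
  simpa using hf.2 {A}

lemma MemP.nonneg (hδ : ∀ A, 0 ≤ δ A) (hf : MemP δ f) (A : Finset X) : 0 ≤ f A :=
  (hδ A).trans (hf.le A)

lemma MemP.union_le (hδ : ∀ A, 0 ≤ δ A) (hf : MemP δ f) (A E : Finset X) :
    δ (A ∪ E) ≤ f A + f E := by
  rcases eq_or_ne A E with rfl | hne
  · rw [Finset.union_self]
    linarith [hf.le A, hf.nonneg hδ A]
  · simpa [Finset.sum_pair hne] using hf.2 {A, E}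

lemma nonempty_of_memP_of_one_lt_card {F : Finset (Finset X → ℝ)} (hF : ∀ f ∈ F, MemP δ f)
    (hcard : 1 < F.card) : Nonempty X := by
  by_contra hX
  rw [not_nonempty_iff] at hX
  refine hcard.not_ge (Finset.card_le_one.2 fun f hf g hg => funext fun A => ?_)
  rw [Subsingleton.elim A ∅, (hF f hf).1, (hF g hg).1]

end General

section Diameter

variable {X : Type*} [MetricSpace X] {G : Finset (Finset X → ℝ)}

lemma diamDiv_nonneg (A : Finset X) : 0 ≤ diamDiv X A :=
  Metric.diam_nonneg

lemma diamDiv_mono {A B : Finset X} (h : A ⊆ B) : diamDiv X A ≤ diamDiv X B :=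
  Metric.diam_mono (Finset.coe_subset.2 h) B.finite_toSet.isBounded

lemma diamDiv_union_le_add (A B : Finset X) (x : X) :
    diamDiv X (A ∪ B) ≤ diamDiv X (A ∪ {x}) + diamDiv X ({x} ∪ B) :=
  calc diamDiv X (A ∪ B) ≤ diamDiv X ((A ∪ {x}) ∪ ({x} ∪ B)) :=
        diamDiv_mono (Finset.union_subset_union Finset.subset_union_left Finset.subset_union_right)
    _ ≤ diamDiv X (A ∪ {x}) + diamDiv X ({x} ∪ B) := by
        unfold diamDiv
        rw [Finset.coe_union]
        exact Metric.diam_union' ⟨x, by simp, by simp⟩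

lemma exists_diamDiv_sup_le_union {𝓐 : Finset (Finset X)} (h𝓐 : 𝓐.Nonempty) :
    ∃ A₁ ∈ 𝓐, ∃ A₂ ∈ 𝓐, diamDiv X (𝓐.sup id) ≤ diamDiv X (A₁ ∪ A₂) := by
  rcases (𝓐.sup id).eq_empty_or_nonempty with hU | hU
  · obtain ⟨A, hA⟩ := h𝓐
    refine ⟨A, hA, A, hA, ?_⟩
    rw [hU]
    exact diamDiv_mono (Finset.empty_subset _)
  obtain ⟨p, hp, hmax⟩ :=
    (𝓐.sup id ×ˢ 𝓐.sup id).exists_max_image (fun p => dist p.1 p.2) (hU.product hU)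
  obtain ⟨hp₁, hp₂⟩ := Finset.mem_product.1 hp
  obtain ⟨A₁, hA₁, h₁⟩ := Finset.mem_sup.1 hp₁
  obtain ⟨A₂, hA₂, h₂⟩ := Finset.mem_sup.1 hp₂
  refine ⟨A₁, hA₁, A₂, hA₂, ?_⟩
  calc diamDiv X (𝓐.sup id) ≤ dist p.1 p.2 :=
        Metric.diam_le_of_forall_dist_le dist_nonneg fun a ha b hb =>
          hmax (a, b) (Finset.mem_product.2 ⟨ha, hb⟩)
    _ ≤ diamDiv X (A₁ ∪ A₂) :=
        Metric.dist_le_diam_of_mem (A₁ ∪ A₂).finite_toSet.isBounded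
          (Finset.mem_union_left _ h₁) (Finset.mem_union_right _ h₂)

lemma exists_deltaTTerm_le_sub_sub (hG : G.Nonempty) (hGP : ∀ f ∈ G, MemP (diamDiv X) f)
    (𝓐 : Finset (Finset X)) : ∃ f₁ ∈ G, ∃ f₂ ∈ G, ∃ A₁ A₂ : Finset X,
      deltaTTerm (diamDiv X) G 𝓐 ≤ diamDiv X (A₁ ∪ A₂) - f₁ A₁ - f₂ A₂ := by
  have hm : ∀ A, 0 ≤ infEval G A :=
    infEval_nonneg fun f hf => (hGP f hf).nonneg diamDiv_nonneg
  rcases 𝓐.eq_empty_or_nonempty with rfl | h𝓐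
  · obtain ⟨f, hf⟩ := hG
    exact ⟨f, hf, f, hf, ∅, ∅, by simp [deltaTTerm, (hGP f hf).1]⟩
  obtain ⟨A₁, hA₁, A₂, hA₂, hdiam⟩ := exists_diamDiv_sup_le_union h𝓐
  obtain ⟨f₁, hf₁, hm₁⟩ := exists_eq_infEval hG A₁
  obtain ⟨f₂, hf₂, hm₂⟩ := exists_eq_infEval hG A₂
  rcases eq_or_ne A₁ A₂ with rfl | hne
  · refine ⟨f₁, hf₁, f₁, hf₁, A₁, ∅, ?_⟩
    have hsum := Finset.single_le_sum (fun A _ => hm A) hA₁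
    simp only [deltaTTerm, Finset.union_self] at hdiam ⊢
    rw [Finset.union_empty, (hGP f₁ hf₁).1]
    linarith
  · refine ⟨f₁, hf₁, f₂, hf₂, A₁, A₂, ?_⟩
    have hsum := Finset.sum_le_sum_of_subset_of_nonneg
      (Finset.insert_subset hA₁ (Finset.singleton_subset_iff.2 hA₂)) fun A _ _ => hm A
    rw [Finset.sum_pair hne] at hsum
    unfold deltaTTerm
    linarith

lemma diamDiv_sub_sub_le_add (x : X) {f₁ f₂ : Finset X → ℝ} (hf₁ : MemP (diamDiv X) f₁)
    (hf₂ : MemP (diamDiv X) f₂) (A₁ A₂ : Finset X) :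
    diamDiv X (A₁ ∪ A₂) - f₁ A₁ - f₂ A₂ ≤ f₁ {x} + f₂ {x} := by
  linarith [diamDiv_union_le_add A₁ A₂ x, hf₁.union_le diamDiv_nonneg A₁ {x},
    hf₂.union_le diamDiv_nonneg {x} A₂]

lemma bddAbove_range_deltaTTerm_diamDiv (x : X) (hG : G.Nonempty)
    (hGP : ∀ f ∈ G, MemP (diamDiv X) f) : BddAbove (Set.range (deltaTTerm (diamDiv X) G)) := by
  refine ⟨2 * ∑ f ∈ G, f {x}, ?_⟩
  rintro _ ⟨𝓐, rfl⟩
  obtain ⟨f₁, hf₁, f₂, hf₂, A₁, A₂, h⟩ := exists_deltaTTerm_le_sub_sub hG hGP 𝓐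
  have hx : ∀ f ∈ G, f {x} ≤ ∑ g ∈ G, g {x} := fun f hf =>
    Finset.single_le_sum (fun g hg => (hGP g hg).nonneg diamDiv_nonneg {x}) hf
  linarith [diamDiv_sub_sub_le_add x (hGP f₁ hf₁) (hGP f₂ hf₂) A₁ A₂, hx f₁ hf₁, hx f₂ hf₂]

end Diameter

/-- the tight span of a diameter diversity is itself a diameter diversity:
for finite `F ⊆ T_X` with at least two elements, `δ_T F = max { δ_T {f₁, f₂} : f₁, f₂ ∈ F }`. -/
theorem tightSpan_of_diamDiv_is_diameter {X : Type*} [MetricSpace X]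
    (F : Finset (Finset X → ℝ)) (hF : ∀ f ∈ F, MemT (diamDiv X) f)
    (hcard : 2 ≤ F.card) :
    ∃ f₁ ∈ F, ∃ f₂ ∈ F,
      deltaT (diamDiv X) F = deltaT (diamDiv X) {f₁, f₂} ∧
      ∀ g₁ ∈ F, ∀ g₂ ∈ F,
        deltaT (diamDiv X) {g₁, g₂} ≤ deltaT (diamDiv X) F := by
  have hFP : ∀ f ∈ F, MemP (diamDiv X) f := fun f hf => (hF f hf).1
  have hFne : F.Nonempty := Finset.card_pos.1 (by omega)
  obtain ⟨x⟩ : Nonempty X := nonempty_of_memP_of_one_lt_card hFP (by omega)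
  have hbdd : ∀ G ⊆ F, G.Nonempty → BddAbove (Set.range (deltaTTerm (diamDiv X) G)) :=
    fun G hGF hG => bddAbove_range_deltaTTerm_diamDiv x hG fun f hf => hFP f (hGF hf)
  have hpair_sub : ∀ g₁ ∈ F, ∀ g₂ ∈ F, {g₁, g₂} ⊆ F := fun g₁ h₁ g₂ h₂ =>
    Finset.insert_subset h₁ (Finset.singleton_subset_iff.2 h₂)
  have hpair_le : ∀ g₁ ∈ F, ∀ g₂ ∈ F, deltaT (diamDiv X) {g₁, g₂} ≤ deltaT (diamDiv X) F :=
    fun g₁ h₁ g₂ h₂ => deltaT_mono (hpair_sub g₁ h₁ g₂ h₂) (Finset.insert_nonempty _ _)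
      (hbdd F subset_rfl hFne)
  obtain ⟨p, hp, hmax⟩ :=
    (F ×ˢ F).exists_max_image (fun q => deltaT (diamDiv X) {q.1, q.2}) (hFne.product hFne)
  obtain ⟨hp₁, hp₂⟩ := Finset.mem_product.1 hp
  refine ⟨p.1, hp₁, p.2, hp₂, le_antisymm ?_ (hpair_le _ hp₁ _ hp₂), hpair_le⟩
  rw [deltaT_eq_iSup hFne]
  refine ciSup_le fun 𝓐 => ?_
  obtain ⟨f₁, h₁, f₂, h₂, A₁, A₂, hgap⟩ := exists_deltaTTerm_le_sub_sub hFne hFP 𝓐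
  calc deltaTTerm (diamDiv X) F 𝓐 ≤ diamDiv X (A₁ ∪ A₂) - f₁ A₁ - f₂ A₂ := hgap
    _ ≤ deltaTTerm (diamDiv X) {f₁, f₂} {A₁, A₂} :=
        sub_sub_le_deltaTTerm_pair ((hFP f₂ h₂).nonneg diamDiv_nonneg) A₁ A₂
    _ ≤ deltaT (diamDiv X) {f₁, f₂} :=
        deltaTTerm_le_deltaT (Finset.insert_nonempty _ _)
          (hbdd _ (hpair_sub f₁ h₁ f₂ h₂) (Finset.insert_nonempty _ _)) _
    _ ≤ deltaT (diamDiv X) {p.1, p.2} := hmax (f₁, f₂) (Finset.mem_product.2 ⟨h₁, h₂⟩)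

end
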